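/- arXiv:1812.02612 — 3 statements merged into one kernel-verified Lean document; each statement's English description precedes it below -/
import Mathlib

section
/- Let F ∈ R^h_d be homogeneous of degree d with Waring rank r, and let Λ ∈ R* extend f* ∈ R_{≤d}* with Λ = Σᵢ₌₁^r λᵢ 𝟙_{ζᵢ} coming from a Waring decomposition. Then there is a monomial basis B of A_Λ = R/I_Λ such that every element of B is (the class of) a monomial of degree at most d. -/
open MvPolynomial

noncomputable section

variable {k : Type*}

def hankelKer [Field k] {n : ℕ} (Λ : Module.Dual k (MvPolynomial (Fin n) k)) :
    Ideal (MvPolynomial (Fin n) k) where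
  carrier := {f | ∀ g, Λ (f * g) = 0}
  zero_mem' := by intro g; simp
  add_mem' := by
    intro a b ha hb g
    rw [add_mul, map_add, ha g, hb g, add_zero]
  smul_mem' := by
    intro c f hf g
    simp only [smul_eq_mul, Set.mem_setOf_eq] at *
    rw [mul_comm c f, mul_assoc]
    exact hf _

def evalDual [CommSemiring k] {n : ℕ} (ζ : Fin n → k) :
    Module.Dual k (MvPolynomial (Fin n) k) := (aeval ζ).toLinearMap

/-- Dehomogenization with respect to the variable `x₀`. -/
def dehom [CommSemiring k] {n : ℕ} (F : MvPolynomial (Fin (n+1)) k) :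
    MvPolynomial (Fin n) k :=
  aeval (fun i => Fin.cases 1 X i) F

/-! Dehomogenization is injective on forms of degree `d`, so `F = ∑ λᵢ Lᵢ ^ d` with
`Lᵢ = x₀ + ∑ ζᵢⱼ xⱼ₊₁`, and minimality of `r` makes the `Lᵢ ^ d` linearly independent.
A functional `c` on `kʳ` vanishing on the vectors `(ζᵢ ^ α)ᵢ`, `|α| ≤ d`, vanishes on the value
vector of every polynomial of degree `≤ d`, in particular of `(y₀ + ∑ yⱼ₊₁ xⱼ) ^ d`, whose value
at `ζᵢ` is `Lᵢ(y) ^ d`; so `∑ cᵢ Lᵢ ^ d = 0`, `c = 0`, and these vectors span `kʳ`. Some `r` of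
them form a basis. Evaluation at the `ζᵢ` is thus onto `kʳ`, hence (as all `λᵢ ≠ 0`) its kernel is
`I_Λ`, and it identifies `A_Λ` with `kʳ`, carrying that basis to classes of monomials. -/

theorem MvPolynomial.IsHomogeneous.eval_smul {σ R : Type*} [Fintype σ] [CommSemiring R]
    {H : MvPolynomial σ R} {m : ℕ} (hH : H.IsHomogeneous m) (c : R) (y : σ → R) :
    eval (c • y) H = c ^ m * eval y H := by
  rw [eval_eq', eval_eq', Finset.mul_sum]
  refine Finset.sum_congr rfl fun α hα => ?_
  have hdeg : ∑ i, α i = m := by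
    simpa [Finsupp.weight_apply, Finsupp.sum_fintype] using hH (mem_support_iff.mp hα)
  simp only [Pi.smul_apply, smul_eq_mul, mul_pow, Finset.prod_mul_distrib,
    Finset.prod_pow_eq_pow_sum, hdeg]
  ring

theorem eval_eq_eval_dehom [CommSemiring k] {n : ℕ} (H : MvPolynomial (Fin (n+1)) k)
    {z : Fin (n+1) → k} (hz : z 0 = 1) : eval z H = eval (Fin.tail z) (dehom H) := by
  induction H using MvPolynomial.induction_on with
  | C a => simp [dehom]
  | add p q hp hq => simp_all [dehom]
  | mul_X p i hp =>
    induction i using Fin.cases <;> simp_all [dehom, Fin.tail]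

theorem MvPolynomial.IsHomogeneous.eq_zero_of_dehom_eq_zero [Field k] [Infinite k] {n d : ℕ}
    {H : MvPolynomial (Fin (n+1)) k} (hH : H.IsHomogeneous d) (h0 : dehom H = 0) : H = 0 := by
  have hvanish : ∀ y : Fin (n+1) → k, y 0 * eval y H = 0 := by
    intro y
    by_cases hy : y 0 = 0
    · simp [hy]
    have hz : ((y 0)⁻¹ • y) 0 = 1 := by simp [inv_mul_cancel₀ hy]
    -- scale `y` onto the chart `x₀ = 1`, where `H` agrees with `dehom H = 0`
    rw [← smul_inv_smul₀ hy y, hH.eval_smul, eval_eq_eval_dehom H hz, h0]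
    simp
  have hX : (X 0 : MvPolynomial (Fin (n+1)) k) * H = 0 :=
    MvPolynomial.funext fun y => by simpa using hvanish y
  exact (mul_eq_zero.mp hX).resolve_left (X_ne_zero 0)

theorem MvPolynomial.IsHomogeneous.eq_of_dehom_eq [Field k] [Infinite k] {n d : ℕ}
    {F G : MvPolynomial (Fin (n+1)) k} (hF : F.IsHomogeneous d) (hG : G.IsHomogeneous d)
    (h : dehom F = dehom G) : F = G :=
  sub_eq_zero.mp <| (hF.sub hG).eq_zero_of_dehom_eq_zero <| by
    simpa [dehom, sub_eq_zero] using h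

theorem linearIndependent_of_minimal_length {K M N : Type*} [DivisionRing K] [AddCommGroup M]
    [Module K M] (p : N → Prop) (φ : N → M) {r : ℕ} (lam : Fin r → K) (L : Fin r → N)
    (hL : ∀ i, p (L i))
    (hmin : ∀ (r' : ℕ) (lam' : Fin r' → K) (L' : Fin r' → N),
      (∀ i, p (L' i)) → ∑ i, lam i • φ (L i) = ∑ i, lam' i • φ (L' i) → r ≤ r') :
    LinearIndependent K (φ ∘ L) := by
  rw [Fintype.linearIndependent_iff]
  by_contra! ⟨c, hc, j, hcj⟩
  obtain ⟨m, rfl⟩ : ∃ m, r = m + 1 := Nat.exists_eq_succ_of_ne_zero j.pos.ne'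
  have hshorter : ∑ i, lam i • φ (L i) =
      ∑ i : Fin m, (lam (j.succAbove i) - lam j * (c j)⁻¹ * c (j.succAbove i)) •
        φ (L (j.succAbove i)) := by
    have hzero : ∑ i, (lam j * (c j)⁻¹ * c i) • φ (L i) = 0 := by
      simp only [mul_smul, ← Finset.smul_sum]
      simpa using congrArg (fun x => lam j • (c j)⁻¹ • x) hc
    rw [← sub_zero (∑ i, lam i • φ (L i)), ← hzero, ← Finset.sum_sub_distrib,
      Fin.sum_univ_succAbove _ j, mul_assoc, inv_mul_cancel₀ hcj, mul_one, ← sub_smul,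
      sub_self, zero_smul, zero_add]
    simp only [sub_smul]
  have := hmin m _ _ (fun i => hL _) hshorter
  omega

def linearForm [CommSemiring k] {n : ℕ} (v : Fin n → k) : MvPolynomial (Fin (n+1)) k :=
  X 0 + ∑ j, C (v j) * X j.succ

theorem isHomogeneous_linearForm [CommSemiring k] {n : ℕ} (v : Fin n → k) :
    (linearForm v).IsHomogeneous 1 :=
  (isHomogeneous_X _ _).add (IsHomogeneous.sum _ _ _ fun _ _ => isHomogeneous_C_mul_X _ _)

theorem dehom_linearForm [CommSemiring k] {n : ℕ} (v : Fin n → k) :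
    dehom (linearForm v) = 1 + ∑ j, C (v j) * X j := by
  simp [dehom, linearForm, algebraMap_eq]

theorem eval_linearForm [CommSemiring k] {n : ℕ} (v : Fin n → k) (y : Fin (n+1) → k) :
    eval y (linearForm v) = aeval v (C (y 0) + ∑ j, C (y j.succ) * X j) := by
  simp [linearForm, mul_comm]

theorem totalDegree_C_add_sum_C_mul_X_le [CommSemiring k] {n : ℕ} (a : k) (b : Fin n → k) :
    (C a + ∑ j, C (b j) * X j : MvPolynomial (Fin n) k).totalDegree ≤ 1 := by
  refine (totalDegree_add _ _).trans (max_le (by simp) ?_)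
  exact (IsHomogeneous.sum _ _ _ fun j _ => isHomogeneous_C_mul_X (b j) j).totalDegree_le

theorem eq_sum_smul_linearForm_pow [Field k] [Infinite k] {n d r : ℕ}
    {F : MvPolynomial (Fin (n+1)) k} (hF : F.IsHomogeneous d)
    (lam : Fin r → k) (ζ : Fin r → (Fin n → k))
    (hdec : dehom F =
      ∑ i, lam i • ((1 : MvPolynomial (Fin n) k) + ∑ j, C (ζ i j) * X j) ^ d) :
    F = ∑ i, lam i • linearForm (ζ i) ^ d := by
  refine hF.eq_of_dehom_eq (IsHomogeneous.sum _ _ _ fun i _ => ?_) ?_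
  · simpa [smul_eq_C_mul] using ((isHomogeneous_linearForm (ζ i)).pow d).C_mul (lam i)
  · rw [hdec]
    simp only [← dehom_linearForm]
    simp [dehom]

def evalAt [CommSemiring k] {σ ι : Type*} (ζ : ι → σ → k) : MvPolynomial σ k →ₐ[k] (ι → k) :=
  AlgHom.pi fun i => aeval (ζ i)

@[simp]
theorem evalAt_apply [CommSemiring k] {σ ι : Type*} (ζ : ι → σ → k) (f : MvPolynomial σ k)
    (i : ι) : evalAt ζ f i = aeval (ζ i) f := rfl

theorem evalAt_mem_span_monomial [CommSemiring k] {σ ι : Type*} (ζ : ι → σ → k) {d : ℕ}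
    {g : MvPolynomial σ k} (hg : g.totalDegree ≤ d) :
    evalAt ζ g ∈ Submodule.span k (Set.range fun α : {α : σ →₀ ℕ // (α.sum fun _ m => m) ≤ d} =>
      evalAt ζ (monomial α.1 1)) := by
  rw [g.as_sum, map_sum]
  refine Submodule.sum_mem _ fun α hα => ?_
  rw [← mul_one (coeff α g), ← smul_eq_mul, ← smul_monomial, map_smul]
  exact Submodule.smul_mem _ _ (Submodule.subset_span ⟨⟨α, (le_totalDegree hα).trans hg⟩, rfl⟩)

theorem span_evalAt_monomial_eq_top [Field k] [Infinite k] {n r d : ℕ} (ζ : Fin r → Fin n → k)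
    (hli : LinearIndependent k fun i => linearForm (ζ i) ^ d) :
    Submodule.span k (Set.range fun α : {α : Fin n →₀ ℕ // (α.sum fun _ m => m) ≤ d} =>
      evalAt ζ (monomial α.1 1)) = ⊤ := by
  by_contra hne
  obtain ⟨φ, hφ0, hφ⟩ := Submodule.exists_le_ker_of_lt_top _ (lt_top_iff_ne_top.mpr hne)
  let c : Fin r → k := fun i => φ fun j => if i = j then 1 else 0
  have hφc : ∀ w, φ w = ∑ i, c i * w i := fun w => by
    simp [φ.pi_apply_eq_sum_univ w, c, mul_comm]
  have hsum : ∑ i, c i • linearForm (ζ i) ^ d = 0 := MvPolynomial.funext fun y => by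
    let g : MvPolynomial (Fin n) k := C (y 0) + ∑ j, C (y j.succ) * X j
    have hg : (g ^ d).totalDegree ≤ d :=
      (totalDegree_pow _ _).trans <| by
        simpa using Nat.mul_le_mul_left d (totalDegree_C_add_sum_C_mul_X_le (y 0) (y ∘ Fin.succ))
    simpa [hφc, eval_linearForm, g] using hφ (evalAt_mem_span_monomial ζ hg)
  have hc : c = 0 := funext (Fintype.linearIndependent_iff.mp hli c hsum)
  exact hφ0 (LinearMap.ext fun w => by simp [hφc, hc])

theorem mem_hankelKer [Field k] {n : ℕ} {Λ : Module.Dual k (MvPolynomial (Fin n) k)}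
    {f : MvPolynomial (Fin n) k} : f ∈ hankelKer Λ ↔ ∀ g, Λ (f * g) = 0 := Iff.rfl

theorem hankelKer_sum_smul_evalDual [Field k] {n r : ℕ} {lam : Fin r → k}
    (hlam : ∀ i, lam i ≠ 0) {ζ : Fin r → Fin n → k} (hsurj : Function.Surjective (evalAt ζ)) :
    hankelKer (∑ i, lam i • evalDual (ζ i)) = RingHom.ker (evalAt ζ) := by
  ext f
  simp only [mem_hankelKer, RingHom.mem_ker, LinearMap.sum_apply, LinearMap.smul_apply,
    evalDual, AlgHom.toLinearMap_apply, map_mul, smul_eq_mul]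
  constructor
  · intro hf
    funext j
    obtain ⟨g, hg⟩ := hsurj (Pi.single j 1)
    have hgi : ∀ i, aeval (ζ i) g = (Pi.single j 1 : Fin r → k) i := fun i => by
      simpa using congrFun hg i
    simpa [hgi, Pi.single_apply, hlam j] using hf g
  · intro hf g
    simp [← evalAt_apply, hf]

theorem exists_basis_eq_comp_of_span_eq_top {K V ι : Type*} [DivisionRing K] [AddCommGroup V]
    [Module K V] [Module.Finite K V] {r : ℕ} (hr : Module.finrank K V = r) {v : ι → V}
    (hv : Submodule.span K (Set.range v) = ⊤) :
    ∃ (B : Fin r → ι) (b : Module.Basis (Fin r) K V), ⇑b = v ∘ B := by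
  obtain ⟨κ, a, -, hspan, hli⟩ := exists_linearIndependent' K v
  let b := Module.Basis.mk hli (by rw [hspan, hv])
  let e := b.indexEquiv (Module.finBasisOfFinrankEq K V hr)
  exact ⟨a ∘ e.symm, b.reindex e, by ext; simp [b]⟩

theorem stmt11_general [Field k] [IsAlgClosed k] {n d r : ℕ}
    (F : MvPolynomial (Fin (n+1)) k) (hF : F.IsHomogeneous d)
    (lam : Fin r → k) (ζ : Fin r → (Fin n → k))
    (hlam : ∀ i, lam i ≠ 0)
    (hdec : dehom F =
      ∑ i, lam i • ((1 : MvPolynomial (Fin n) k) + ∑ j, C (ζ i j) * X j) ^ d)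
    (hmin : ∀ (r' : ℕ) (lam' : Fin r' → k) (L : Fin r' → MvPolynomial (Fin (n+1)) k),
        (∀ i, (L i).IsHomogeneous 1) → F = ∑ i, lam' i • L i ^ d → r ≤ r')
    (Λ : Module.Dual k (MvPolynomial (Fin n) k))
    (hΛ : Λ = ∑ i, lam i • evalDual (ζ i)) :
    ∃ B : Fin r → (Fin n →₀ ℕ),
      (∀ i, ((B i).sum fun _ m => m) ≤ d) ∧
      (LinearIndependent k fun i =>
        Ideal.Quotient.mk (hankelKer Λ) (monomial (B i) (1 : k))) ∧
      Submodule.span k (Set.range fun i =>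
        Ideal.Quotient.mk (hankelKer Λ) (monomial (B i) (1 : k))) = ⊤ := by
  have hFdec := eq_sum_smul_linearForm_pow hF lam ζ hdec
  have hli : LinearIndependent k fun i => linearForm (ζ i) ^ d :=
    linearIndependent_of_minimal_length (·.IsHomogeneous 1) (· ^ d) lam _
      (fun i => isHomogeneous_linearForm (ζ i))
      fun r' lam' L hL h => hmin r' lam' L hL (hFdec.trans h)
  have hspan := span_evalAt_monomial_eq_top ζ hli
  have hsurj : Function.Surjective (evalAt ζ) := by
    rw [← AlgHom.coe_toLinearMap, ← LinearMap.range_eq_top, eq_top_iff, ← hspan,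
      Submodule.span_le]
    rintro _ ⟨α, rfl⟩
    exact ⟨_, rfl⟩
  obtain ⟨B, b, hb⟩ := exists_basis_eq_comp_of_span_eq_top (Module.finrank_fin_fun k) hspan
  let e : (MvPolynomial (Fin n) k ⧸ hankelKer Λ) ≃ₐ[k] (Fin r → k) :=
    (Ideal.quotientEquivAlgOfEq k (hΛ ▸ hankelKer_sum_smul_evalDual hlam hsurj)).trans
      (Ideal.quotientKerAlgEquivOfSurjective hsurj)
  let b' := b.map e.symm.toLinearEquiv
  have hb' : ⇑b' = fun i => Ideal.Quotient.mk (hankelKer Λ) (monomial (B i).1 (1 : k)) := by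
    ext i
    simp [b', hb, e]
  exact ⟨fun i => (B i).1, fun i => (B i).2, hb' ▸ b'.linearIndependent, hb' ▸ b'.span_eq⟩

theorem stmt11 [Field k] [IsAlgClosed k] [CharZero k] {n d r : ℕ}
    (F : MvPolynomial (Fin (n+1)) k) (hF : F.IsHomogeneous d)
    (lam : Fin r → k) (ζ : Fin r → (Fin n → k))
    (hlam : ∀ i, lam i ≠ 0) (hζ : Function.Injective ζ)
    (hdec : dehom F =
      ∑ i, lam i • ((1 : MvPolynomial (Fin n) k) + ∑ j, C (ζ i j) * X j) ^ d)
    (hmin : ∀ (r' : ℕ) (lam' : Fin r' → k) (L : Fin r' → MvPolynomial (Fin (n+1)) k),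
        (∀ i, (L i).IsHomogeneous 1) → F = ∑ i, lam' i • L i ^ d → r ≤ r')
    (Λ : Module.Dual k (MvPolynomial (Fin n) k))
    (hΛ : Λ = ∑ i, lam i • evalDual (ζ i)) :
    ∃ B : Fin r → (Fin n →₀ ℕ),
      (∀ i, ((B i).sum fun _ m => m) ≤ d) ∧
      (LinearIndependent k fun i =>
        Ideal.Quotient.mk (hankelKer Λ) (monomial (B i) (1 : k))) ∧
      Submodule.span k (Set.range fun i =>
        Ideal.Quotient.mk (hankelKer Λ) (monomial (B i) (1 : k))) = ⊤ :=
  stmt11_general F hF lam ζ hlam hdec hmin Λ hΛ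

end
end

section
/- Let l = 1+Σlᵢxᵢ and g = 1+Σgᵢxᵢ be affine linear forms, Λ ∈ R* with I_Λ zero-dimensional, and Γ ∈ R* with Γ ∈ I_Λ^⊥ and Γ = 𝟙_l + (1/d)·𝟙_l ∘ Σᵢ(gᵢ−lᵢ)∂ᵢ. Then for each index j: if gⱼ = lⱼ, Γ is an eigenvector of M_{xⱼ}^t with eigenvalue lⱼ; if gⱼ ≠ lⱼ, Γ is a rank-2 generalized eigenvector of M_{xⱼ}^t with eigenvalue lⱼ, and (M_{xⱼ}^t − lⱼ)(Γ) is a nonzero multiple of 𝟙_l. Precisely, M_{xⱼ}^t Γ = lⱼ·Γ + ((gⱼ−lⱼ)/d)·𝟙_l. -/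
open MvPolynomial

noncomputable section

variable {k : Type*}

def Mt [CommSemiring k] {n : ℕ} (a : MvPolynomial (Fin n) k) :
    Module.End k (Module.Dual k (MvPolynomial (Fin n) k)) :=
  LinearMap.lcomp k k (LinearMap.mulLeft k a)

/-! Multiplying by `X j` and evaluating at `a` is evaluating and then multiplying by `a j`;
by the Leibniz rule, the first-order differential condition `𝟙_a ∘ ∂ᵢ` picks up in addition
the term `δᵢⱼ 𝟙_a`. Hence `𝟙_a + ∑ cᵢ 𝟙_a ∘ ∂ᵢ` is sent by `M_{xⱼ}ᵗ - aⱼ` to `cⱼ 𝟙_a`, and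
`𝟙_a` itself is an eigenvector. -/

section

variable [CommSemiring k] {n : ℕ}

@[simp]
theorem Mt_apply (p : MvPolynomial (Fin n) k) (φ : Module.Dual k (MvPolynomial (Fin n) k))
    (f : MvPolynomial (Fin n) k) : Mt p φ f = φ (p * f) :=
  rfl

@[simp]
theorem evalDual_apply (a : Fin n → k) (f : MvPolynomial (Fin n) k) :
    evalDual a f = aeval a f :=
  rfl

theorem evalDual_ne_zero [Nontrivial k] (a : Fin n → k) : evalDual a ≠ 0 := fun h => by
  simpa using LinearMap.congr_fun h 1

theorem Mt_X_evalDual (a : Fin n → k) (j : Fin n) :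
    Mt (X j) (evalDual a) = a j • evalDual a :=
  LinearMap.ext fun f => by simp

theorem Mt_X_evalDual_comp_pderiv (a : Fin n → k) (i j : Fin n) :
    Mt (X j) (evalDual a ∘ₗ (pderiv i).toLinearMap) =
      a j • (evalDual a ∘ₗ (pderiv i).toLinearMap) + if i = j then evalDual a else 0 :=
  LinearMap.ext fun f => by
    rcases eq_or_ne i j with rfl | hij
    · simp [add_comm]
    · simp [pderiv_X, hij, hij.symm]

theorem Mt_X_evalDual_add_sum_pderiv (a c : Fin n → k) (j : Fin n) :
    Mt (X j) (evalDual a + ∑ i, c i • (evalDual a ∘ₗ (pderiv i).toLinearMap)) =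
      a j • (evalDual a + ∑ i, c i • (evalDual a ∘ₗ (pderiv i).toLinearMap)) +
        c j • evalDual a := by
  simp only [map_add, map_sum, map_smul, Mt_X_evalDual, Mt_X_evalDual_comp_pderiv, smul_add,
    Finset.sum_add_distrib, smul_ite, smul_zero, Finset.sum_ite_eq', Finset.mem_univ, if_true,
    Finset.smul_sum, smul_comm (c _) (a j)]
  abel

end

theorem stmt13_general [Field k] [CharZero k] {n d : ℕ} (hd : 1 ≤ d)
    (a b : Fin n → k)
    (Γ : Module.Dual k (MvPolynomial (Fin n) k))
    (hΓ : Γ = evalDual a + (d : k)⁻¹ •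
        ∑ i, (b i - a i) • (evalDual a ∘ₗ (pderiv i).toLinearMap)) :
    (∀ j, Mt (X j) Γ = a j • Γ + ((b j - a j) / (d : k)) • evalDual a) ∧
    (∀ j, b j = a j → Mt (X j) Γ = a j • Γ) ∧
    (∀ j, b j ≠ a j →
      Mt (X j) Γ - a j • Γ ≠ 0 ∧
      (Mt (X j) - a j • 1 : Module.End k (Module.Dual k (MvPolynomial (Fin n) k))) (Mt (X j) Γ - a j • Γ) = 0 ∧
      ∃ c : k, c ≠ 0 ∧ Mt (X j) Γ - a j • Γ = c • evalDual a) := by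
  have hd0 : (d : k) ≠ 0 := Nat.cast_ne_zero.mpr (by omega)
  have hΓ' : Γ = evalDual a +
      ∑ i, ((b i - a i) / (d : k)) • (evalDual a ∘ₗ (pderiv i).toLinearMap) := by
    simp only [hΓ, Finset.smul_sum, smul_smul, div_eq_inv_mul]
  have hMt (j : Fin n) : Mt (X j) Γ = a j • Γ + ((b j - a j) / (d : k)) • evalDual a := by
    rw [hΓ']
    exact Mt_X_evalDual_add_sum_pderiv a _ j
  have hsub (j : Fin n) : Mt (X j) Γ - a j • Γ = ((b j - a j) / (d : k)) • evalDual a := by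
    rw [hMt j, add_sub_cancel_left]
  refine ⟨hMt, fun j hj => by simp [hMt j, hj], fun j hj => ?_⟩
  have hc : (b j - a j) / (d : k) ≠ 0 := div_ne_zero (sub_ne_zero.mpr hj) hd0
  refine ⟨?_, ?_, _, hc, hsub j⟩
  · rw [hsub j]
    exact smul_ne_zero hc (evalDual_ne_zero a)
  · simp [hsub j, Mt_X_evalDual]

theorem stmt13 [Field k] [IsAlgClosed k] [CharZero k] {n d : ℕ} (hd : 1 ≤ d)
    (a b : Fin n → k)
    (Λ : Module.Dual k (MvPolynomial (Fin n) k))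
    (hfin : FiniteDimensional k (MvPolynomial (Fin n) k ⧸ hankelKer Λ))
    (Γ : Module.Dual k (MvPolynomial (Fin n) k))
    (hΓperp : ∀ f ∈ hankelKer Λ, Γ f = 0)
    (hΓ : Γ = evalDual a + (d : k)⁻¹ •
        ∑ i, (b i - a i) • (evalDual a ∘ₗ (pderiv i).toLinearMap)) :
    (∀ j, Mt (X j) Γ = a j • Γ + ((b j - a j) / (d : k)) • evalDual a) ∧
    (∀ j, b j = a j → Mt (X j) Γ = a j • Γ) ∧
    (∀ j, b j ≠ a j →
      Mt (X j) Γ - a j • Γ ≠ 0 ∧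
      (Mt (X j) - a j • 1 : Module.End k (Module.Dual k (MvPolynomial (Fin n) k))) (Mt (X j) Γ - a j • Γ) = 0 ∧
      ∃ c : k, c ≠ 0 ∧ Mt (X j) Γ - a j • Γ = c • evalDual a) :=
  stmt13_general hd a b Γ hΓ

end
end

section
/- Let F ∈ R^h_d and Λ ∈ R* an extension of f* with I_Λ zero-dimensional and generalized decomposition Λ = Σᵢ₌₁^s 𝟙_{ζᵢ} ∘ pᵢ(∂). If kᵢ ≥ deg pᵢ + 1 for each i, then the intersection of powers of maximal ideals m_{ζ₁}^{k₁} ∩ ... ∩ m_{ζ_s}^{k_s} is contained in I_Λ, and I_Λ is contained in the dehomogenized annihilator of F; consequently F admits a decomposition F = Σᵢ₌₁^s Lᵢ^{d−kᵢ+1}·Nᵢ where Lᵢ = x₀ + (ζᵢ)₁x₁ + ... + (ζᵢ)ₙxₙ and Nᵢ is homogeneous of degree kᵢ−1. -/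
/-!
A derivative of order `j` maps `m ^ (j + 1)` into `m`, so each summand `𝟙_ζ ∘ p(∂)` of `Λ` kills
`m_ζ ^ K` as soon as `K > deg p`; and `f*` vanishes on `I_Λ` in degree `≤ d` because it agrees
with `Λ` there. The decomposition follows by duality: let `φ` be a linear form vanishing on every
`Lᵢ ^ (d - Kᵢ + 1) * Nᵢ` and put `G = φ_y(⟨x, y⟩ ^ d)`. The Taylor coefficient of order `γ` of `G`
at `(1, ζᵢ)` is a nonzero multiple of `φ(Lᵢ ^ (d - |γ|) * x ^ γ)`, which vanishes for `|γ| < Kᵢ`.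
So the dehomogenization of `G` lies in `⋂ m_{ζᵢ} ^ Kᵢ ⊆ I_Λ`, hence is apolar to `f`; but its
apolar pairing with `f` is `φ(F)`. Thus `φ(F) = 0` for every such `φ`.
-/

open MvPolynomial

noncomputable section

variable {k : Type*}

def mBin [Field k] {n : ℕ} (d : ℕ) (α : Fin n →₀ ℕ) : k :=
  (d.factorial : k) /
    (((α.prod fun _ m => m.factorial : ℕ) : k) * ((d - α.sum fun _ m => m).factorial : ℕ))

/-- The apolar product on polynomials of degree at most `d`. -/
def apolar [Field k] {n : ℕ} (d : ℕ) (f g : MvPolynomial (Fin n) k) : k :=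
  ∑ α ∈ f.support, f.coeff α * g.coeff α / mBin d α

/-- The differential operator `∂^α`. -/
def pderivPow [CommRing k] {n : ℕ} (α : Fin n →₀ ℕ) :
    Module.End k (MvPolynomial (Fin n) k) :=
  (List.ofFn fun i : Fin n => ((pderiv i).toLinearMap) ^ (α i)).prod

/-- The differential operator `p(∂)` associated to a polynomial `p`. -/
def diffOp [CommRing k] {n : ℕ} (p : MvPolynomial (Fin n) k) :
    Module.End k (MvPolynomial (Fin n) k) :=
  ∑ α ∈ p.support, p.coeff α • pderivPow α

section LowersIdealPow

variable {R A : Type*} [CommRing R] [CommRing A] [Algebra R A] (I : Ideal A)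

def LowersIdealPow (m : ℕ) (f : Module.End R A) : Prop :=
  ∀ j, ∀ x ∈ I ^ (j + m), f x ∈ I ^ j

variable {I}

lemma lowersIdealPow_one : LowersIdealPow I 0 (1 : Module.End R A) :=
  fun _ _ hx => hx

lemma LowersIdealPow.mul {f g : Module.End R A} {a b : ℕ} (hf : LowersIdealPow I a f)
    (hg : LowersIdealPow I b g) : LowersIdealPow I (a + b) (f * g) :=
  fun j x hx => hf j _ (hg (j + a) x (by rwa [← add_assoc] at hx))

lemma LowersIdealPow.list_prod {ι : Type*} (l : List ι) {f : ι → Module.End R A} {m : ι → ℕ}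
    (h : ∀ i ∈ l, LowersIdealPow I (m i) (f i)) :
    LowersIdealPow I (l.map m).sum (l.map f).prod := by
  induction l with
  | nil => exact lowersIdealPow_one
  | cons i l ih =>
    simp only [List.map_cons, List.sum_cons, List.prod_cons]
    exact (h i List.mem_cons_self).mul (ih fun i hi => h i (List.mem_cons_of_mem _ hi))

lemma LowersIdealPow.pow {f : Module.End R A} (hf : LowersIdealPow I 1 f) (a : ℕ) :
    LowersIdealPow I a (f ^ a) := by
  induction a with
  | zero => exact lowersIdealPow_one
  | succ a ih => rw [pow_succ]; exact ih.mul hf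

lemma lowersIdealPow_derivation (D : Derivation R A A) :
    LowersIdealPow I 1 (D : Module.End R A) := by
  intro j
  induction j with
  | zero => simp [Ideal.one_eq_top]
  | succ j ih =>
    intro x hx
    rw [pow_succ] at hx
    refine Submodule.mul_induction_on hx (fun a ha b hb => ?_) fun a b ha hb => ?_
    · change D (a * b) ∈ _
      rw [D.leibniz, smul_eq_mul, smul_eq_mul, mul_comm b]
      exact add_mem (Ideal.mul_mem_right _ _ ha) (pow_succ I j ▸ Ideal.mul_mem_mul (ih a ha) hb)
    · rw [map_add]; exact add_mem ha hb

end LowersIdealPow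

lemma lowersIdealPow_pderivPow [CommRing k] {n : ℕ} (I : Ideal (MvPolynomial (Fin n) k))
    (α : Fin n →₀ ℕ) : LowersIdealPow I α.degree (pderivPow α) := by
  have h := LowersIdealPow.list_prod (I := I) (List.finRange n) (m := α)
    (f := fun i => ((pderiv i : Derivation k _ _) : Module.End k _) ^ α i)
    fun i _ => (lowersIdealPow_derivation _).pow _
  rwa [← List.ofFn_eq_map, ← List.ofFn_eq_map, List.sum_ofFn, ← Finsupp.degree_eq_sum] at h

lemma diffOp_mem_of_mem_pow [CommRing k] {n K : ℕ} {I : Ideal (MvPolynomial (Fin n) k)}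
    {p x : MvPolynomial (Fin n) k} (hp : p.totalDegree < K) (hx : x ∈ I ^ K) :
    diffOp p x ∈ I := by
  rw [diffOp, LinearMap.sum_apply]
  refine Submodule.sum_mem I fun α hα => ?_
  rw [LinearMap.smul_apply]
  refine Submodule.smul_of_tower_mem I _ ?_
  have hα : α.degree < K := (le_totalDegree hα).trans_lt hp
  refine Ideal.pow_le_self (Nat.sub_ne_zero_of_lt hα) ?_
  exact lowersIdealPow_pderivPow I α _ x (by rwa [Nat.sub_add_cancel hα.le])

lemma span_X_sub_C_le_ker_aeval {σ : Type*} [CommRing k] (ζ : σ → k) :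
    Ideal.span (Set.range fun j => X j - C (ζ j)) ≤
      RingHom.ker (aeval ζ : MvPolynomial σ k →ₐ[k] k) := by
  rw [Ideal.span_le]
  rintro _ ⟨j, rfl⟩
  simp [RingHom.mem_ker]

lemma iInf_pow_le_hankelKer [Field k] {n s : ℕ} {Λ : Module.Dual k (MvPolynomial (Fin n) k)}
    {ζ : Fin s → Fin n → k} {p : Fin s → MvPolynomial (Fin n) k}
    (hΛ : Λ = ∑ i, evalDual (ζ i) ∘ₗ diffOp (p i)) {K : Fin s → ℕ}
    (hK : ∀ i, (p i).totalDegree + 1 ≤ K i) :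
    ⨅ i, Ideal.span (Set.range fun j => X j - C (ζ i j)) ^ K i ≤ hankelKer Λ := by
  intro x hx g
  rw [hΛ, LinearMap.sum_apply]
  refine Finset.sum_eq_zero fun i _ => ?_
  have hxg := Ideal.mul_mem_right g _ ((Submodule.mem_iInf _).1 hx i)
  exact span_X_sub_C_le_ker_aeval (ζ i) (diffOp_mem_of_mem_pow (hK i) hxg)

lemma apolar_monomial_one [Field k] {n : ℕ} (d : ℕ) (f : MvPolynomial (Fin n) k)
    (α : Fin n →₀ ℕ) : apolar d f (monomial α 1) = f.coeff α / mBin d α := by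
  rw [apolar, Finset.sum_eq_single α (fun β _ hβ => by simp [coeff_monomial, Ne.symm hβ])
    (fun hα => by simp [notMem_support_iff.1 hα]), coeff_monomial, if_pos rfl, mul_one]

lemma apolar_eq_sum_support_right [Field k] {n : ℕ} (d : ℕ) (f h : MvPolynomial (Fin n) k) :
    apolar d f h = ∑ α ∈ h.support, h.coeff α * apolar d f (monomial α 1) := by
  simp only [apolar_monomial_one]
  rw [apolar]
  calc ∑ α ∈ f.support, f.coeff α * h.coeff α / mBin d α
      = ∑ α ∈ f.support ∪ h.support, f.coeff α * h.coeff α / mBin d α :=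
        Finset.sum_subset Finset.subset_union_left fun α _ hα => by
          rw [notMem_support_iff.1 hα]; ring
    _ = ∑ α ∈ f.support ∪ h.support, h.coeff α * (f.coeff α / mBin d α) :=
        Finset.sum_congr rfl fun _ _ => by ring
    _ = _ := (Finset.sum_subset Finset.subset_union_right fun α _ hα => by
          rw [notMem_support_iff.1 hα]; ring).symm

lemma Module.Dual.apply_eq_sum_support [CommSemiring k] {σ : Type*}
    (ψ : Module.Dual k (MvPolynomial σ k)) (h : MvPolynomial σ k) :
    ψ h = ∑ α ∈ h.support, h.coeff α * ψ (monomial α 1) := by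
  conv_lhs => rw [h.as_sum]
  rw [map_sum]
  refine Finset.sum_congr rfl fun α _ => ?_
  rw [← smul_eq_mul, ← map_smul, smul_monomial, smul_eq_mul, mul_one]

lemma apolar_eq_zero_of_mem_hankelKer [Field k] {n d : ℕ} {f : MvPolynomial (Fin n) k}
    {Λ : Module.Dual k (MvPolynomial (Fin n) k)}
    (hext : ∀ α : Fin n →₀ ℕ, (α.sum fun _ m => m) ≤ d →
        Λ (monomial α 1) = apolar d f (monomial α 1))
    {h : MvPolynomial (Fin n) k} (hh : h ∈ hankelKer Λ) (hdeg : h.totalDegree ≤ d) :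
    apolar d f h = 0 := by
  have hΛh : Λ h = 0 := by simpa using hh 1
  rw [apolar_eq_sum_support_right, ← hΛh, Λ.apply_eq_sum_support]
  exact Finset.sum_congr rfl fun α hα => by rw [hext α ((le_totalDegree hα).trans hdeg)]

lemma Finsupp.degree_eq_head_add_degree_tail {n : ℕ} (β : Fin (n + 1) →₀ ℕ) :
    β.degree = β 0 + (Finsupp.tail β).degree := by
  rw [Finsupp.degree_eq_sum, Finsupp.degree_eq_sum, Fin.sum_univ_succ]
  rfl

def homogenizeExp {n : ℕ} (d : ℕ) (α : Fin n →₀ ℕ) : Fin (n + 1) →₀ ℕ :=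
  Finsupp.cons (d - α.degree) α

lemma MvPolynomial.IsHomogeneous.degree_eq_of_mem_support {σ R : Type*} [CommSemiring R]
    {F : MvPolynomial σ R} {d : ℕ} (hF : F.IsHomogeneous d) {β : σ →₀ ℕ} (hβ : β ∈ F.support) :
    β.degree = d :=
  (hF.degree_eq_sum_deg_support hβ).symm

section homogenizeExp

variable {n d : ℕ}

@[simp]
lemma tail_homogenizeExp (α : Fin n →₀ ℕ) : Finsupp.tail (homogenizeExp d α) = α :=
  Finsupp.tail_cons _ α

lemma degree_homogenizeExp {α : Fin n →₀ ℕ} (h : α.degree ≤ d) :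
    (homogenizeExp d α).degree = d := by
  rw [Finsupp.degree_eq_head_add_degree_tail, tail_homogenizeExp, homogenizeExp,
    Finsupp.cons_zero]
  omega

lemma homogenizeExp_tail {β : Fin (n + 1) →₀ ℕ} (h : β.degree = d) :
    homogenizeExp d (Finsupp.tail β) = β := by
  rw [homogenizeExp, ← h, Finsupp.degree_eq_head_add_degree_tail, Nat.add_sub_cancel,
    Finsupp.cons_tail]

end homogenizeExp

section dehom

variable [CommSemiring k] {n d : ℕ}

lemma dehom_monomial (β : Fin (n + 1) →₀ ℕ) (c : k) :
    dehom (monomial β c) = monomial (Finsupp.tail β) c := by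
  rw [dehom, aeval_monomial, Finsupp.prod_fintype _ _ fun _ => pow_zero _, Fin.prod_univ_succ,
    monomial_eq, Finsupp.prod_fintype _ _ fun _ => pow_zero _]
  simp only [Fin.cases_zero, Fin.cases_succ, one_pow, one_mul, algebraMap_eq, Finsupp.tail_apply]

lemma dehom_eq_sum_support (F : MvPolynomial (Fin (n + 1)) k) :
    dehom F = ∑ β ∈ F.support, monomial (Finsupp.tail β) (F.coeff β) := by
  conv_lhs => rw [F.as_sum]
  rw [dehom, map_sum]
  exact Finset.sum_congr rfl fun β _ => dehom_monomial β _

lemma coeff_dehom {F : MvPolynomial (Fin (n + 1)) k} (hF : F.IsHomogeneous d)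
    (α : Fin n →₀ ℕ) : (dehom F).coeff α = F.coeff (homogenizeExp d α) := by
  rw [dehom_eq_sum_support, coeff_sum]
  simp only [coeff_monomial]
  rw [Finset.sum_eq_single (homogenizeExp d α) (fun β hβ hne => if_neg fun htail => hne ?_)
    fun hα => by rw [notMem_support_iff.1 hα, ite_self]]
  · exact if_pos (tail_homogenizeExp α)
  · rw [← htail, homogenizeExp_tail (hF.degree_eq_of_mem_support hβ)]

lemma totalDegree_dehom_le {F : MvPolynomial (Fin (n + 1)) k} (hF : F.IsHomogeneous d) :
    (dehom F).totalDegree ≤ d := by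
  rw [dehom_eq_sum_support]
  refine (totalDegree_finsetSum _ _).trans (Finset.sup_le fun β hβ => ?_)
  refine (totalDegree_monomial_le _ _).trans ?_
  have := Finsupp.degree_eq_head_add_degree_tail β
  have : β.degree = d := hF.degree_eq_of_mem_support hβ
  change (Finsupp.tail β).degree ≤ d
  omega

lemma sum_support_dehom {M : Type*} [AddCommMonoid M] {F : MvPolynomial (Fin (n + 1)) k}
    (hF : F.IsHomogeneous d) (g : (Fin (n + 1) →₀ ℕ) → k → M) :
    ∑ α ∈ (dehom F).support, g (homogenizeExp d α) ((dehom F).coeff α) =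
      ∑ β ∈ F.support, g β (F.coeff β) := by
  refine Finset.sum_nbij' (homogenizeExp d) Finsupp.tail (fun α hα => ?_) (fun β hβ => ?_)
    (fun α _ => tail_homogenizeExp α)
    (fun β hβ => homogenizeExp_tail (hF.degree_eq_of_mem_support hβ))
    fun α _ => by rw [coeff_dehom hF]
  · rwa [mem_support_iff, ← coeff_dehom hF, ← mem_support_iff]
  · rwa [mem_support_iff, coeff_dehom hF, homogenizeExp_tail (hF.degree_eq_of_mem_support hβ),
      ← mem_support_iff]

end dehom

section dualPoly

open Finset

variable {σ : Type*} [Fintype σ] [DecidableEq σ]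

lemma prod_X_pow_eq_monomial_equivFunOnFinite [CommSemiring k] (β : σ → ℕ) :
    ∏ i, (X i : MvPolynomial σ k) ^ β i = monomial (Finsupp.equivFunOnFinite.symm β) 1 := by
  rw [prod_X_pow]
  exact congrArg (monomial · 1) (Finsupp.ext fun i => by simp [Finsupp.indicator_apply])

/-- The polynomial `φ(⟨x, y⟩ ^ d)`, where `φ` acts on the `y` variables. -/
def dualPoly [CommSemiring k] (d : ℕ) (φ : Module.Dual k (MvPolynomial σ k)) :
    MvPolynomial σ k :=
  ∑ β ∈ piAntidiag univ d, C (Nat.multinomial univ β * φ (∏ i, X i ^ β i)) * ∏ i, X i ^ β i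

variable [CommSemiring k] {d : ℕ} (φ : Module.Dual k (MvPolynomial σ k))

lemma isHomogeneous_dualPoly : (dualPoly d φ).IsHomogeneous d := by
  refine IsHomogeneous.sum _ _ _ fun β hβ => ?_
  rw [← (mem_piAntidiag.1 hβ).1, ← zero_add (∑ i ∈ univ, β i)]
  exact (isHomogeneous_C σ _).mul
    (IsHomogeneous.prod univ _ β fun i _ => isHomogeneous_X_pow i (β i))

lemma coeff_dualPoly {β : σ →₀ ℕ} (hβ : β.degree = d) :
    (dualPoly d φ).coeff β = Nat.multinomial univ β * φ (monomial β 1) := by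
  have hβ' : ⇑β ∈ piAntidiag univ d := by simp [← hβ, Finsupp.degree_eq_sum]
  simp only [dualPoly, coeff_sum, prod_X_pow_eq_monomial_equivFunOnFinite, coeff_C_mul,
    coeff_monomial, mul_ite, mul_one, mul_zero]
  rw [sum_eq_single_of_mem _ hβ' fun b _ hb => if_neg fun h => hb (by rw [← h]; rfl)]
  simp

end dualPoly

lemma mBin_eq_multinomial_homogenizeExp [Field k] [CharZero k] {n d : ℕ} {α : Fin n →₀ ℕ}
    (h : α.degree ≤ d) :
    mBin d α = (Nat.multinomial Finset.univ (homogenizeExp d α) : k) := by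
  have hspec := Nat.multinomial_spec Finset.univ (homogenizeExp d α)
  rw [← Finsupp.degree_eq_sum, degree_homogenizeExp h, Fin.prod_univ_succ] at hspec
  simp only [homogenizeExp, Finsupp.cons_zero, Finsupp.cons_succ,
    ← Finsupp.prod_fintype α (fun _ m => m.factorial) fun _ => rfl] at hspec
  have hprod : (α.prod fun _ m => m.factorial) ≠ 0 :=
    Finset.prod_ne_zero_iff.2 fun _ _ => Nat.factorial_ne_zero _
  change (d.factorial : k) / (((α.prod fun _ m => m.factorial : ℕ) : k) *
    ((d - α.degree).factorial : ℕ)) = _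
  rw [div_eq_iff (mul_ne_zero (Nat.cast_ne_zero.2 hprod)
    (Nat.cast_ne_zero.2 (Nat.factorial_ne_zero _))), ← hspec, homogenizeExp]
  push_cast
  ring

lemma apolar_dehom_dualPoly [Field k] [CharZero k] {n d : ℕ} {F : MvPolynomial (Fin (n + 1)) k}
    (hF : F.IsHomogeneous d) (φ : Module.Dual k (MvPolynomial (Fin (n + 1)) k)) :
    apolar d (dehom F) (dehom (dualPoly d φ)) = φ F := by
  have hterm : ∀ α ∈ (dehom F).support, (dehom F).coeff α * (dehom (dualPoly d φ)).coeff α /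
      mBin d α = (dehom F).coeff α * φ (monomial (homogenizeExp d α) 1) := by
    intro α hα
    have hα : α.degree ≤ d := (le_totalDegree hα).trans (totalDegree_dehom_le hF)
    rw [coeff_dehom (isHomogeneous_dualPoly φ), coeff_dualPoly φ (degree_homogenizeExp hα),
      mBin_eq_multinomial_homogenizeExp hα, mul_div_assoc,
      mul_div_cancel_left₀ _ (Nat.cast_ne_zero.2 (Nat.multinomial_pos _ _).ne')]
  rw [apolar, Finset.sum_congr rfl hterm,
    sum_support_dehom hF fun β c => c * φ (monomial β 1), φ.apply_eq_sum_support]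

lemma X_add_C_pow_eq_sum {σ R : Type*} [CommSemiring R] (i : σ) (r : R) (b : ℕ) :
    (X i + C r : MvPolynomial σ R) ^ b =
      ∑ m ∈ Finset.range (b + 1), monomial (Finsupp.single i m) (b.choose m * r ^ (b - m)) := by
  rw [add_pow]
  refine Finset.sum_congr rfl fun m _ => ?_
  rw [← C_pow, X_pow_eq_monomial, ← map_natCast (C : R →+* MvPolynomial σ R), mul_assoc,
    ← map_mul, mul_comm, C_mul_monomial, mul_one, mul_comm]

theorem Nat.factorial_mul_prod_factorial_mul_multinomial_add_mul_prod_choose {ι : Type*}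
    (s : Finset ι) (u γ : ι → ℕ) :
    (∑ i ∈ s, u i).factorial * (∏ i ∈ s, (γ i).factorial) * multinomial s (u + γ) *
        ∏ i ∈ s, (u i + γ i).choose (γ i) =
      (∑ i ∈ s, (u i + γ i)).factorial * multinomial s u := by
  refine Nat.eq_of_mul_eq_mul_right (m := ∏ i ∈ s, (u i).factorial)
    (Finset.prod_pos fun i _ => (u i).factorial_pos) ?_
  have hfac : ∏ i ∈ s, (u i + γ i).factorial = (∏ i ∈ s, (u i + γ i).choose (γ i)) *
      (∏ i ∈ s, (γ i).factorial) * ∏ i ∈ s, (u i).factorial := by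
    simp_rw [← Finset.prod_mul_distrib, ← Nat.add_choose_mul_factorial_mul_factorial]
    exact Finset.prod_congr rfl fun i _ => by ring
  have hspec := multinomial_spec s (u + γ)
  simp only [Pi.add_apply] at hspec
  calc _ = (∑ i ∈ s, u i).factorial *
        ((∏ i ∈ s, (u i + γ i).factorial) * multinomial s (u + γ)) := by
        rw [hfac]; ring
    _ = _ := by rw [hspec, ← multinomial_spec s u]; ring

section shift

open Finset

variable {σ : Type*} [Fintype σ] [DecidableEq σ]

lemma coeff_prod_X_add_C_pow {R : Type*} [CommSemiring R] (ℓ : σ → R) (β : σ → ℕ)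
    (γ : σ →₀ ℕ) : (∏ i, (X i + C (ℓ i)) ^ β i : MvPolynomial σ R).coeff γ =
      ∏ i, ((β i).choose (γ i) * ℓ i ^ (β i - γ i)) := by
  have hγ : ∀ p : σ → ℕ, ∑ i, Finsupp.single i (p i) = γ ↔ p = ⇑γ := fun p => by
    rw [← DFunLike.coe_fn_eq, Finsupp.coe_univ_sum_single]
  simp_rw [X_add_C_pow_eq_sum, prod_univ_sum, ← monomial_sum_prod, coeff_sum, coeff_monomial,
    hγ, sum_ite_eq']
  split_ifs with h
  · rfl
  · obtain ⟨i, hi⟩ : ∃ i, β i < γ i := by simpa [Fintype.mem_piFinset, Nat.lt_succ_iff] using h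
    exact (prod_eq_zero (mem_univ i) (by simp [Nat.choose_eq_zero_of_lt hi])).symm

variable [CommSemiring k] {d : ℕ} (φ : Module.Dual k (MvPolynomial σ k)) (ℓ : σ → k)

lemma coeff_aeval_X_add_C_dualPoly (γ : σ →₀ ℕ) :
    (aeval (fun i => X i + C (ℓ i)) (dualPoly d φ)).coeff γ =
      ∑ β ∈ piAntidiag univ d, Nat.multinomial univ β * φ (∏ i, X i ^ β i) *
        ∏ i, ((β i).choose (γ i) * ℓ i ^ (β i - γ i)) := by
  simp only [dualPoly, map_sum, coeff_sum]
  refine sum_congr rfl fun β _ => ?_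
  rw [map_mul, aeval_C, algebraMap_eq, coeff_C_mul, map_prod (aeval _)]
  simp only [map_pow, aeval_X]
  rw [coeff_prod_X_add_C_pow]

lemma Module.Dual.apply_linearForm_pow_mul (e : ℕ) (q : MvPolynomial σ k) :
    φ ((∑ i, C (ℓ i) * X i) ^ e * q) =
      ∑ u ∈ piAntidiag univ e, Nat.multinomial univ u * (∏ i, ℓ i ^ u i) *
        φ ((∏ i, X i ^ u i) * q) := by
  rw [sum_pow_eq_sum_piAntidiag, sum_mul, map_sum]
  refine sum_congr rfl fun u _ => ?_
  have hC : ((Nat.multinomial univ u : MvPolynomial σ k) * ∏ i, (C (ℓ i) * X i) ^ u i) * q =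
      C (Nat.multinomial univ u * ∏ i, ℓ i ^ u i) * ((∏ i, X i ^ u i) * q) := by
    simp only [mul_pow, prod_mul_distrib, ← C_pow, map_mul, map_prod, map_natCast]
    ring
  rw [hC, C_mul', map_smul, smul_eq_mul]

lemma sum_filter_le_piAntidiag_eq_sum_piAntidiag {M : Type*} [AddCommMonoid M] {γ : σ → ℕ}
    (hγ : ∑ i, γ i ≤ d) (f : (σ → ℕ) → M) :
    ∑ β ∈ piAntidiag univ d with ∀ i, γ i ≤ β i, f β =
      ∑ u ∈ piAntidiag univ (d - ∑ i, γ i), f (u + γ) := by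
  refine sum_nbij' (· - γ) (· + γ) (fun β hβ => ?_) (fun u hu => ?_)
    (fun β hβ => tsub_add_cancel_of_le (mem_filter.1 hβ).2) (fun u _ => add_tsub_cancel_right u γ)
    fun β hβ => by rw [tsub_add_cancel_of_le (mem_filter.1 hβ).2]
  · simp only [mem_filter, mem_piAntidiag, mem_univ, implies_true, and_true] at hβ ⊢
    change ∑ i, (β i - γ i) = d - ∑ i, γ i
    rw [sum_tsub_distrib _ fun i _ => hβ.2 i, hβ.1]
  · simp only [mem_filter, mem_piAntidiag, mem_univ, implies_true, and_true] at hu ⊢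
    refine ⟨?_, fun i => le_add_self⟩
    change ∑ i, (u i + γ i) = d
    rw [sum_add_distrib, hu, Nat.sub_add_cancel hγ]

lemma factorial_mul_coeff_aeval_X_add_C_dualPoly {γ : σ →₀ ℕ} (hγ : γ.degree ≤ d) :
    (d - γ.degree).factorial * (∏ i, (γ i).factorial) *
        (aeval (fun i => X i + C (ℓ i)) (dualPoly d φ)).coeff γ =
      d.factorial * φ ((∑ i, C (ℓ i) * X i) ^ (d - γ.degree) * monomial γ 1) := by
  rw [Finsupp.degree_eq_sum] at hγ ⊢
  -- Only `β ≥ γ` contribute, since otherwise a binomial coefficient vanishes; put `β = u + γ`.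
  rw [coeff_aeval_X_add_C_dualPoly, φ.apply_linearForm_pow_mul, mul_sum, mul_sum,
    ← sum_filter_of_ne (p := fun β => ∀ i, γ i ≤ β i),
    sum_filter_le_piAntidiag_eq_sum_piAntidiag hγ]
  · refine sum_congr rfl fun u hu => ?_
    have hX : (∏ i, X i ^ u i) * monomial γ (1 : k) = ∏ i, X i ^ (u + ⇑γ) i := by
      rw [← Finsupp.equivFunOnFinite_symm_coe γ, ← prod_X_pow_eq_monomial_equivFunOnFinite,
        ← prod_mul_distrib]
      simp only [Pi.add_apply, pow_add, Finsupp.coe_equivFunOnFinite_symm]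
    have hnat := congrArg (Nat.cast : ℕ → k)
      (Nat.factorial_mul_prod_factorial_mul_multinomial_add_mul_prod_choose univ u γ)
    rw [sum_add_distrib, (mem_piAntidiag.1 hu).1, Nat.sub_add_cancel hγ] at hnat
    simp only [Nat.cast_mul, Nat.cast_prod] at hnat ⊢
    simp only [hX, Pi.add_apply, add_tsub_cancel_right, prod_mul_distrib]
    calc _ = (φ (∏ i, X i ^ (u i + γ i)) * ∏ i, ℓ i ^ u i) *
          ((((d - ∑ i, γ i).factorial : k) * ∏ i, ((γ i).factorial : k)) *
            (Nat.multinomial univ (u + ⇑γ) : k) * ∏ i, ((u i + γ i).choose (γ i) : k)) := by ring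
      _ = _ := by rw [hnat]; ring
  · intro β _ hne
    by_contra hle
    obtain ⟨i, hi⟩ : ∃ i, β i < γ i := by simpa using hle
    have hchoose : ∏ i, ((β i).choose (γ i) * ℓ i ^ (β i - γ i) : k) = 0 :=
      prod_eq_zero (mem_univ i) (by simp [Nat.choose_eq_zero_of_lt hi])
    exact hne (by rw [hchoose, mul_zero, mul_zero])

end shift

lemma coeff_aeval_X_add_C_dualPoly_eq_zero {σ : Type*} [Fintype σ] [DecidableEq σ] [CommRing k]
    [IsDomain k] [CharZero k] {d K : ℕ} (φ : Module.Dual k (MvPolynomial σ k)) (ℓ : σ → k) (hKd : K ≤ d)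
    (hφ : ∀ N : MvPolynomial σ k, N.IsHomogeneous (K - 1) →
      φ ((∑ i, C (ℓ i) * X i) ^ (d - K + 1) * N) = 0)
    {γ : σ →₀ ℕ} (hγ : γ.degree < K) :
    (aeval (fun i => X i + C (ℓ i)) (dualPoly d φ)).coeff γ = 0 := by
  set L : MvPolynomial σ k := ∑ i, C (ℓ i) * X i
  have hL : L.IsHomogeneous 1 :=
    IsHomogeneous.sum _ _ _ fun i _ => isHomogeneous_C_mul_X (ℓ i) i
  have hsplit : L ^ (d - γ.degree) * monomial γ 1 =
      L ^ (d - K + 1) * (L ^ (K - 1 - γ.degree) * monomial γ 1) := by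
    rw [← mul_assoc, ← pow_add]
    congr 2
    omega
  have hN : (L ^ (K - 1 - γ.degree) * monomial γ 1).IsHomogeneous (K - 1) := by
    have h := (hL.pow (K - 1 - γ.degree)).mul (isHomogeneous_monomial (d := γ) (1 : k) rfl)
    rwa [one_mul, Nat.sub_add_cancel (by omega)] at h
  have hkey := factorial_mul_coeff_aeval_X_add_C_dualPoly φ ℓ (hγ.le.trans (by omega))
  rw [hsplit, hφ _ hN, mul_zero] at hkey
  refine (mul_eq_zero.1 hkey).resolve_left (mul_ne_zero ?_ ?_) <;> norm_cast
  · exact Nat.factorial_ne_zero _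
  · exact Finset.prod_ne_zero_iff.2 fun i _ => Nat.factorial_ne_zero _

lemma mem_pow_span_X_sub_C_of_aeval_X_add_C_mem {σ R : Type*} [CommRing R] (ℓ : σ → R) {K : ℕ}
    {p : MvPolynomial σ R} (hp : aeval (fun i => X i + C (ℓ i)) p ∈ idealOfVars σ R ^ K) :
    p ∈ Ideal.span (Set.range fun i => X i - C (ℓ i)) ^ K := by
  have hinv : (aeval fun i => X i - C (ℓ i)).comp (aeval fun i => X i + C (ℓ i)) =
      AlgHom.id R (MvPolynomial σ R) := by
    ext i
    simp
  have hmap := Ideal.mem_map_of_mem (aeval fun i => X i - C (ℓ i)) hp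
  rw [← AlgHom.comp_apply, hinv, AlgHom.id_apply, Ideal.map_pow, Ideal.map_span,
    ← Set.range_comp] at hmap
  simpa [Function.comp_def] using hmap

lemma dehom_mem_pow_span_X_sub_C [CommRing k] {n K : ℕ} (ζ : Fin n → k)
    {P : MvPolynomial (Fin (n + 1)) k}
    (hP : P ∈ Ideal.span (Set.range fun t => X t - C ((Fin.cons 1 ζ : Fin (n + 1) → k) t)) ^ K) :
    dehom P ∈ Ideal.span (Set.range fun j => X j - C (ζ j)) ^ K := by
  have hmap := Ideal.mem_map_of_mem (aeval (fun t => Fin.cases 1 X t) :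
    MvPolynomial (Fin (n + 1)) k →ₐ[k] MvPolynomial (Fin n) k) hP
  rw [Ideal.map_pow, Ideal.map_span] at hmap
  refine Ideal.pow_right_mono (Ideal.span_le.2 ?_) _ hmap
  rintro _ ⟨_, ⟨t, rfl⟩, rfl⟩
  induction t using Fin.cases with
  | zero => simp
  | succ j =>
    simpa using (Ideal.subset_span ⟨j, rfl⟩ :
      X j - C (ζ j) ∈ Ideal.span (Set.range fun j => X j - C (ζ j)))

lemma dehom_dualPoly_mem_pow_span_X_sub_C [Field k] [CharZero k] {n d K : ℕ} (ζ : Fin n → k)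
    (φ : Module.Dual k (MvPolynomial (Fin (n + 1)) k)) (hKd : K ≤ d)
    (hφ : ∀ N : MvPolynomial (Fin (n + 1)) k, N.IsHomogeneous (K - 1) →
      φ ((X 0 + ∑ j : Fin n, C (ζ j) * X j.succ) ^ (d - K + 1) * N) = 0) :
    dehom (dualPoly d φ) ∈ Ideal.span (Set.range fun j => X j - C (ζ j)) ^ K := by
  have hL : X 0 + ∑ j : Fin n, C (ζ j) * X j.succ =
      ∑ t, C ((Fin.cons 1 ζ : Fin (n + 1) → k) t) * X t := by
    simp [Fin.sum_univ_succ]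
  refine dehom_mem_pow_span_X_sub_C ζ (mem_pow_span_X_sub_C_of_aeval_X_add_C_mem _ ?_)
  rw [mem_pow_idealOfVars_iff']
  exact fun γ hγ => coeff_aeval_X_add_C_dualPoly_eq_zero φ _ hKd (by simpa only [hL] using hφ) hγ

lemma exists_eq_sum_mul_of_mem_iSup_map_mulLeft {R A ι : Type*} [CommSemiring R] [Semiring A]
    [Algebra R A] [Fintype ι] {H : ι → Submodule R A} {P : ι → A} {x : A}
    (hx : x ∈ ⨆ i, (H i).map (LinearMap.mulLeft R (P i))) :
    ∃ N : ι → A, (∀ i, N i ∈ H i) ∧ x = ∑ i, P i * N i := by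
  obtain ⟨f, hf, rfl⟩ := (Submodule.mem_iSup_iff_exists_finsupp _ x).1 hx
  choose N hN hfN using fun i => Submodule.mem_map.1 (hf i)
  refine ⟨N, hN, ?_⟩
  rw [Finsupp.sum_fintype _ _ fun _ => rfl]
  exact Finset.sum_congr rfl fun i _ => (hfN i).symm

/-- One direction of the apolarity lemma [IK, Thm 5.3.D]. -/
lemma mem_iSup_of_apolar_eq_zero [Field k] [CharZero k] {n d s : ℕ}
    {F : MvPolynomial (Fin (n + 1)) k} (hF : F.IsHomogeneous d) (ζ : Fin s → Fin n → k)
    {K : Fin s → ℕ} (hKd : ∀ i, K i ≤ d)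
    (hapolar : ∀ h ∈ ⨅ i, Ideal.span (Set.range fun j => X j - C (ζ i j)) ^ K i,
      h.totalDegree ≤ d → apolar d (dehom F) h = 0) :
    F ∈ ⨆ i, (homogeneousSubmodule (Fin (n + 1)) k (K i - 1)).map
      (LinearMap.mulLeft k ((X 0 + ∑ j : Fin n, C (ζ i j) * X j.succ) ^ (d - K i + 1))) := by
  by_contra hFV
  obtain ⟨φ, hφF, hφ⟩ := Submodule.exists_dual_map_eq_bot_of_notMem hFV inferInstance
  refine hφF (apolar_dehom_dualPoly hF φ ▸ hapolar _ ?_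
    (totalDegree_dehom_le (isHomogeneous_dualPoly φ)))
  refine Submodule.mem_iInf _ |>.2 fun i => dehom_dualPoly_mem_pow_span_X_sub_C (ζ i) φ (hKd i)
    fun N hN => LinearMap.le_ker_iff_map.2 hφ ?_
  exact Submodule.mem_iSup_of_mem i (Submodule.mem_map_of_mem ((mem_homogeneousSubmodule _ _).2 hN))

theorem stmt18_general [Field k] [CharZero k] {n d s : ℕ}
    (F : MvPolynomial (Fin (n+1)) k) (hF : F.IsHomogeneous d)
    (Λ : Module.Dual k (MvPolynomial (Fin n) k))
    (hext : ∀ α : Fin n →₀ ℕ, (α.sum fun _ m => m) ≤ d →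
        Λ (monomial α 1) = apolar d (dehom F) (monomial α 1))
    (ζ : Fin s → (Fin n → k)) (p : Fin s → MvPolynomial (Fin n) k)
    (hΛ : Λ = ∑ i, evalDual (ζ i) ∘ₗ diffOp (p i))
    (K : Fin s → ℕ) (hK : ∀ i, (p i).totalDegree + 1 ≤ K i) (hKd : ∀ i, K i ≤ d) :
    ((⨅ i, (Ideal.span (Set.range fun j => X j - C (ζ i j))) ^ K i) ≤ hankelKer Λ) ∧
    (∀ h ∈ hankelKer Λ, h.totalDegree ≤ d → apolar d (dehom F) h = 0) ∧
    ∃ N : Fin s → MvPolynomial (Fin (n+1)) k,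
      (∀ i, (N i).IsHomogeneous (K i - 1)) ∧
      F = ∑ i, (X 0 + ∑ j : Fin n, C (ζ i j) * X j.succ) ^ (d - K i + 1) * N i := by
  have hinf := iInf_pow_le_hankelKer hΛ hK
  have hapolar : ∀ h ∈ hankelKer Λ, h.totalDegree ≤ d → apolar d (dehom F) h = 0 :=
    fun _ => apolar_eq_zero_of_mem_hankelKer hext
  obtain ⟨N, hN, hFN⟩ := exists_eq_sum_mul_of_mem_iSup_map_mulLeft
    (mem_iSup_of_apolar_eq_zero hF ζ hKd fun h hh => hapolar h (hinf hh))
  exact ⟨hinf, hapolar, N, fun i => (mem_homogeneousSubmodule _ _).1 (hN i), hFN⟩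

theorem stmt18 [Field k] [IsAlgClosed k] [CharZero k] {n d s : ℕ}
    (F : MvPolynomial (Fin (n+1)) k) (hF : F.IsHomogeneous d)
    (Λ : Module.Dual k (MvPolynomial (Fin n) k))
    (hext : ∀ α : Fin n →₀ ℕ, (α.sum fun _ m => m) ≤ d →
        Λ (monomial α 1) = apolar d (dehom F) (monomial α 1))
    (hfin : FiniteDimensional k (MvPolynomial (Fin n) k ⧸ hankelKer Λ))
    (ζ : Fin s → (Fin n → k)) (p : Fin s → MvPolynomial (Fin n) k)
    (hζ : Function.Injective ζ)
    (hΛ : Λ = ∑ i, evalDual (ζ i) ∘ₗ diffOp (p i))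
    (K : Fin s → ℕ) (hK : ∀ i, (p i).totalDegree + 1 ≤ K i) (hKd : ∀ i, K i ≤ d) :
    ((⨅ i, (Ideal.span (Set.range fun j => X j - C (ζ i j))) ^ K i) ≤ hankelKer Λ) ∧
    (∀ h ∈ hankelKer Λ, h.totalDegree ≤ d → apolar d (dehom F) h = 0) ∧
    ∃ N : Fin s → MvPolynomial (Fin (n+1)) k,
      (∀ i, (N i).IsHomogeneous (K i - 1)) ∧
      F = ∑ i, (X 0 + ∑ j : Fin n, C (ζ i j) * X j.succ) ^ (d - K i + 1) * N i :=
  stmt18_general F hF Λ hext ζ p hΛ K hK hKd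
end
end
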